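/- Let G be a core input-output network with super-simple nodes ρ₀ = ι ≺ ρ₁ ≺ ⋯ ≺ ρ_{q+1} = o. Then every ιo-simple path decomposes uniquely as a concatenation ι ⇝ ρ₁ ⇝ ρ₂ ⇝ ⋯ ⇝ ρ_q ⇝ o of simple path segments between consecutive super-simple nodes, and each intermediate node of the segment ρ_{j-1} ⇝ ρ_j is a simple node σ with ρ_{j-1} ≺ σ ≺ ρ_j. -/

import Mathlib

/-- A simple (directed) path from `a` to `b`: nonempty node list, consecutive arrows,
no repeated nodes. -/
def IsSPath {V : Type*} (E : V → V → Prop) (a b : V) (p : List V) : Prop :=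
  p.Chain' E ∧ p.Nodup ∧ p.head? = some a ∧ p.getLast? = some b

/-- An `ιo`-simple path. -/
def IoSPath {V : Type*} (E : V → V → Prop) (ι o : V) (p : List V) : Prop :=
  IsSPath E ι o p

/-- A node is simple if it lies on some `ιo`-simple path. -/
def SimpleNode {V : Type*} (E : V → V → Prop) (ι o v : V) : Prop :=
  ∃ p, IoSPath E ι o p ∧ v ∈ p

/-- A node is appendage if it is not simple. -/
def Appendage {V : Type*} (E : V → V → Prop) (ι o v : V) : Prop :=
  ¬ SimpleNode E ι o v

/-- A node is super-simple if it lies on every `ιo`-simple path. -/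
def SuperSimple {V : Type*} (E : V → V → Prop) (ι o v : V) : Prop :=
  ∀ p, IoSPath E ι o p → v ∈ p

/-- A core network: every node is reachable from `ι` and reaches `o`. -/
def Core {V : Type*} (E : V → V → Prop) (ι o : V) : Prop :=
  ∀ v, Relation.ReflTransGen E ι v ∧ Relation.ReflTransGen E v o

/-- `a` occurs (strictly) before `b` on some `ιo`-simple path. -/
def OccBefore {V : Type*} (E : V → V → Prop) (ι o a b : V) : Prop :=
  ∃ p, IoSPath E ι o p ∧ [a, b].Sublist p

/-- Strict partial order on simple nodes induced by super-simple nodes: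
`a ≺ b` iff there is a super-simple node `ρ` with `a` (weakly) before `ρ`
and `ρ` (weakly) before `b` along `ιo`-simple paths, and `a ≠ b`. -/
def SLt {V : Type*} (E : V → V → Prop) (ι o a b : V) : Prop :=
  a ≠ b ∧ ∃ ρ, SuperSimple E ι o ρ ∧ (a = ρ ∨ OccBefore E ι o a ρ) ∧
    (b = ρ ∨ OccBefore E ι o ρ b)

/-- Adjacent (consecutive) super-simple nodes. -/
def AdjSS {V : Type*} (E : V → V → Prop) (ι o ρ ρ' : V) : Prop :=
  SuperSimple E ι o ρ ∧ SuperSimple E ι o ρ' ∧ SLt E ι o ρ ρ' ∧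
  ¬ ∃ ρ'', SuperSimple E ι o ρ'' ∧ SLt E ι o ρ ρ'' ∧ SLt E ι o ρ'' ρ'

/-- The simple subnetwork between adjacent super-simple nodes `ρ ≺ ρ'`. -/
def SimpleSubnet {V : Type*} (E : V → V → Prop) (ι o ρ ρ' : V) : Set V :=
  {σ | SimpleNode E ι o σ ∧ SLt E ι o ρ σ ∧ SLt E ι o σ ρ'}

/-- Two simple nodes lie in the same simple subnetwork. -/
def SameSimpleSubnet {V : Type*} (E : V → V → Prop) (ι o a b : V) : Prop :=
  ∃ ρ ρ', AdjSS E ι o ρ ρ' ∧ a ∈ SimpleSubnet E ι o ρ ρ' ∧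
    b ∈ SimpleSubnet E ι o ρ ρ'

/-- `a ⪯ b`: either `a ≺ b`, or `a = b` is super-simple, or `a`, `b` lie in
the same simple subnetwork. -/
def SLe {V : Type*} (E : V → V → Prop) (ι o a b : V) : Prop :=
  SLt E ι o a b ∨ (a = b ∧ SuperSimple E ι o a) ∨ SameSimpleSubnet E ι o a b

/-- An appendage path from `a` to `b`: a simple path containing an appendage
node, all of whose nodes other than the endpoints are appendage. -/
def AppPath {V : Type*} (E : V → V → Prop) (ι o a b : V) (p : List V) : Prop :=
  IsSPath E a b p ∧ (∃ x ∈ p, Appendage E ι o x) ∧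
  ∀ x ∈ p, x ≠ a → x ≠ b → Appendage E ι o x

/-- Reachability inside a set of nodes. -/
def ReachIn {V : Type*} (E : V → V → Prop) (s : Set V) (a b : V) : Prop :=
  Relation.ReflTransGen (fun x y => E x y ∧ x ∈ s ∧ y ∈ s) a b

/-- `a` and `b` belong to the same transitive (strongly connected) component
of the subnetwork induced on `s`. -/
def SameTCIn {V : Type*} (E : V → V → Prop) (s : Set V) (a b : V) : Prop :=
  a ∈ s ∧ b ∈ s ∧ ReachIn E s a b ∧ ReachIn E s b a

/-- A super-appendage node: an appendage node whose transitive component in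
every complementary subnetwork `C_S` consists only of appendage nodes. -/
def SuperAppendage {V : Type*} (E : V → V → Prop) (ι o τ : V) : Prop :=
  Appendage E ι o τ ∧ ∀ p, IoSPath E ι o p → τ ∉ p →
    ∀ x, SameTCIn E {v | v ∉ p} τ x → Appendage E ι o x

/-- An appendage subnetwork: a transitive component of the subnetwork of
super-appendage nodes. -/
def IsAppSubnet {V : Type*} (E : V → V → Prop) (ι o : V) (A : Set V) : Prop :=
  ∃ τ, SuperAppendage E ι o τ ∧
    A = {x | SameTCIn E {v | SuperAppendage E ι o v} τ x}

/-- There is an appendage path from `σ` to `κ`. -/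
def HasAppPathTo {V : Type*} (E : V → V → Prop) (ι o σ κ : V) : Prop :=
  ∃ p, AppPath E ι o σ κ p

/-- `σ = σᵘ(κ)`: if `κ` is simple then `σ = κ`; otherwise `σ` is a minimal
upstream simple node with an appendage path to `κ`. -/
def IsSigmaU {V : Type*} (E : V → V → Prop) (ι o κ σ : V) : Prop :=
  (SimpleNode E ι o κ ∧ σ = κ) ∨
  (Appendage E ι o κ ∧ SimpleNode E ι o σ ∧ HasAppPathTo E ι o σ κ ∧
    ∀ σ', SimpleNode E ι o σ' → HasAppPathTo E ι o σ' κ → ¬ SLt E ι o σ' σ)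

/-- There is an appendage path from some node of `A` to `σ`. -/
def HasAppPathFromSet {V : Type*} (E : V → V → Prop) (ι o : V) (A : Set V)
    (σ : V) : Prop :=
  ∃ τ ∈ A, ∃ p, AppPath E ι o τ σ p

/-- `σ = σᵈ(A)`: a maximal downstream simple node with an appendage path
from `A`. -/
def IsSigmaD {V : Type*} (E : V → V → Prop) (ι o : V) (A : Set V) (σ : V) : Prop :=
  SimpleNode E ι o σ ∧ HasAppPathFromSet E ι o A σ ∧
    ∀ σ', SimpleNode E ι o σ' → HasAppPathFromSet E ι o A σ' → ¬ SLt E ι o σ σ'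

/-- A simple (directed) cycle, given by its list of distinct nodes with a
closing arrow from the last node back to the first. -/
def IsSimpleCycle {V : Type*} (E : V → V → Prop) (c : List V) : Prop :=
  c.Chain' E ∧ c.Nodup ∧ ∃ a b, c.head? = some a ∧ c.getLast? = some b ∧ E b a

/-- `τ` is a linked appendage node of the simple subnetwork determined by the
adjacent super-simple pair `ρ ≺ ρ'`. -/
def Linked {V : Type*} (E : V → V → Prop) (ι o ρ ρ' τ : V) : Prop :=
  Appendage E ι o τ ∧ ¬ SuperAppendage E ι o τ ∧
  ∃ p, IoSPath E ι o p ∧ τ ∉ p ∧ ∀ x, SameTCIn E {v | v ∉ p} τ x →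
    x = τ ∨ x ∈ SimpleSubnet E ι o ρ ρ' ∨
      (Appendage E ι o x ∧ ¬ SuperAppendage E ι o x)

/-- The structural subnetwork determined by adjacent super-simple nodes
`ρ ≺ ρ'`: the two super-simple nodes, the simple subnetwork between them,
and its linked appendage nodes. -/
def StructuralSet {V : Type*} (E : V → V → Prop) (ι o ρ ρ' : V) : Set V :=
  {ρ, ρ'} ∪ SimpleSubnet E ι o ρ ρ' ∪ {τ | Linked E ι o ρ ρ' τ}

/-- `L` is a structural subnetwork. -/
def IsStructSubnet {V : Type*} (E : V → V → Prop) (ι o : V) (L : Set V) : Prop :=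
  ∃ ρ ρ', AdjSS E ι o ρ ρ' ∧ L = StructuralSet E ι o ρ ρ'

/-!
Super-simple nodes occur in the same order on every `ιo`-simple path: if a super-simple `a`
came before `b` on one path and after `b` on another, following the second path up to `b` and
the first one from `b` on gives an `ιo`-walk avoiding `a`, and shortening it to a simple path
contradicts super-simplicity. So on a fixed path `p`, `≺` between super-simple nodes is the
order of their positions on `p`. The segment of `p` containing `σ` is then delimited by the last
super-simple node before `σ` and the first one after it, and any other adjacent pair around `σ`
would have one of these two strictly between its ends.
-/

namespace List
variable {α : Type*}

theorem pair_sublist_of_idxOf_lt [DecidableEq α] {x y : α} :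
    ∀ {l : List α}, x ∈ l → y ∈ l → l.idxOf x < l.idxOf y → [x, y] <+ l
  | [], hx, _, _ => absurd hx not_mem_nil
  | a :: l, hx, hy, h => by
    by_cases hxa : x = a
    · subst hxa
      have hyx : y ≠ x := by rintro rfl; omega
      exact (singleton_sublist.2 ((mem_cons.1 hy).resolve_left hyx)).cons_cons x
    · have hya : y ≠ a := by rintro rfl; simp at h
      rw [idxOf_cons_ne _ (Ne.symm hxa), idxOf_cons_ne _ (Ne.symm hya)] at h
      exact (pair_sublist_of_idxOf_lt ((mem_cons.1 hx).resolve_left hxa)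
        ((mem_cons.1 hy).resolve_left hya) (by omega)).cons a

theorem Nodup.pair_sublist_iff [DecidableEq α] {l : List α} (hl : l.Nodup) {x y : α}
    (hx : x ∈ l) (hy : y ∈ l) : [x, y] <+ l ↔ l.idxOf x < l.idxOf y := by
  refine ⟨fun h => ?_, pair_sublist_of_idxOf_lt hx hy⟩
  obtain ⟨l₁, l₂, rfl, hx₁, hy₂⟩ := cons_sublist_iff.1 h
  have hy₁ : y ∉ l₁ := fun hy₁ =>
    (nodup_append.1 hl).2.2 y hy₁ y (singleton_sublist.1 hy₂) rfl
  rw [idxOf_append_of_mem hx₁, idxOf_append_of_notMem hy₁]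
  have := idxOf_lt_length_iff.2 hx₁
  omega

theorem Sublist.exists_eq_append_cons_snd {x y : α} {l : List α} (h : [x, y] <+ l) :
    ∃ l₁ l₂, l = l₁ ++ y :: l₂ ∧ x ∈ l₁ := by
  obtain ⟨r₁, r₂, rfl, hx, hy⟩ := cons_sublist_iff.1 h
  obtain ⟨s, t, rfl⟩ := append_of_mem (singleton_sublist.1 hy)
  exact ⟨r₁ ++ s, t, by simp, mem_append_left s hx⟩

theorem Sublist.exists_eq_append_cons_fst {x y : α} {l : List α} (h : [x, y] <+ l) :
    ∃ l₁ l₂, l = l₁ ++ x :: l₂ ∧ y ∈ l₂ := by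
  obtain ⟨r₁, r₂, rfl, hx, hy⟩ := cons_sublist_iff.1 h
  obtain ⟨s, t, rfl⟩ := append_of_mem hx
  exact ⟨s, t ++ r₂, by simp, mem_append_right t (singleton_sublist.1 hy)⟩

theorem IsChain.splice {R : α → α → Prop} {u v w x : List α} {b : α}
    (h₁ : (u ++ b :: v).IsChain R) (h₂ : (w ++ b :: x).IsChain R) :
    (u ++ b :: x).IsChain R := by
  rw [← singleton_append, ← append_assoc] at h₁
  rw [← singleton_append] at h₂ ⊢
  simpa using h₁.left_of_append.append_overlap h₂.right_of_append (cons_ne_nil b [])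

end List

section Paths
variable {V : Type*} {E : V → V → Prop}

theorem exists_isSPath_subset_of_isChain {a b : V} :
    ∀ {w : List V}, w.IsChain E → w.head? = some a → w.getLast? = some b →
      ∃ q, IsSPath E a b q ∧ q ⊆ w
  | w, hw, ha, hb => by
    by_cases hnd : w.Nodup
    · exact ⟨w, ⟨hw, hnd, ha, hb⟩, List.Subset.refl w⟩
    obtain ⟨x, hx⟩ := List.exists_duplicate_iff_not_nodup.2 hnd
    obtain ⟨s, m, rfl, hxm⟩ := (List.duplicate_iff_sublist.1 hx).exists_eq_append_cons_fst
    obtain ⟨m₁, t, rfl⟩ := List.append_of_mem hxm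
    have hlen : (s ++ x :: t).length < (s ++ x :: (m₁ ++ x :: t)).length := by simp
    obtain ⟨q, hq, hqw⟩ := exists_isSPath_subset_of_isChain
      (hw.splice (w := s ++ x :: m₁) (by simpa using hw))
      (by cases s <;> simpa using ha)
      (by rw [← hb]; simp [List.getLast?_append, List.getLast?_cons])
    exact ⟨q, hq, fun y hy => by have := hqw hy; simp only [List.mem_append, List.mem_cons] at this ⊢; tauto⟩
termination_by w => w.length

theorem IsSPath.pair_sublist_head {a b x : V} {p : List V} (hp : IsSPath E a b p) (hx : x ∈ p)
    (hxa : x ≠ a) : [a, x].Sublist p := by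
  obtain ⟨t, rfl⟩ : ∃ t, p = a :: t := by
    cases p with
    | nil => simp at hx
    | cons c t => exact ⟨t, by simpa using hp.2.2.1⟩
  exact (List.singleton_sublist.2 ((List.mem_cons.1 hx).resolve_left hxa)).cons_cons a

theorem IsSPath.pair_sublist_getLast {a b x : V} {p : List V} (hp : IsSPath E a b p)
    (hx : x ∈ p) (hxb : x ≠ b) : [x, b].Sublist p := by
  obtain ⟨t, rfl⟩ : ∃ t, p = t ++ [b] := List.getLast?_eq_some_iff.1 hp.2.2.2
  exact (List.singleton_sublist.2 (by simpa [hxb] using hx)).append (List.Sublist.refl [b])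

variable {ι o : V}

theorem superSimple_input : SuperSimple E ι o ι := fun _ hp =>
  List.mem_of_mem_head? hp.2.2.1

theorem superSimple_output : SuperSimple E ι o o := fun _ hp =>
  List.mem_of_mem_getLast? hp.2.2.2

theorem SuperSimple.not_pair_sublist_of_pair_sublist {a b : V} {p q : List V}
    (ha : SuperSimple E ι o a) (hp : IoSPath E ι o p) (hq : IoSPath E ι o q)
    (hab : [a, b].Sublist p) : ¬ [b, a].Sublist q := by
  intro hba
  obtain ⟨w, x, rfl, haw⟩ := hab.exists_eq_append_cons_snd
  obtain ⟨u, v, rfl, hav⟩ := hba.exists_eq_append_cons_fst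
  obtain ⟨r, hr, hru⟩ := exists_isSPath_subset_of_isChain (hq.1.splice hp.1)
    (by rw [← hq.2.2.1]; cases u <;> simp)
    (by rw [← hp.2.2.2]; simp [List.getLast?_append, List.getLast?_cons])
  have hpnd := hp.2.1
  have hqnd := hq.2.1
  simp only [List.nodup_append, List.nodup_cons] at hpnd hqnd
  rcases List.mem_append.1 (hru (ha r hr)) with hau | hax
  · exact hqnd.2.2 a hau a (List.mem_cons_of_mem b hav) rfl
  rcases List.mem_cons.1 hax with rfl | hax
  · exact hqnd.2.1.1 hav
  · exact hpnd.2.2 a haw a (List.mem_cons_of_mem _ hax) rfl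

theorem SLt.of_pair_sublist_left {x y : V} {p : List V} (hx : SuperSimple E ι o x)
    (hp : IoSPath E ι o p) (h : [x, y].Sublist p) : SLt E ι o x y :=
  ⟨fun hxy => List.nodup_iff_sublist.1 hp.2.1 x (hxy ▸ h), x, hx, Or.inl rfl,
    Or.inr ⟨p, hp, h⟩⟩

theorem SLt.of_pair_sublist_right {x y : V} {p : List V} (hy : SuperSimple E ι o y)
    (hp : IoSPath E ι o p) (h : [x, y].Sublist p) : SLt E ι o x y :=
  ⟨fun hxy => List.nodup_iff_sublist.1 hp.2.1 x (hxy ▸ h), y, hy, Or.inr ⟨p, hp, h⟩,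
    Or.inl rfl⟩

variable [DecidableEq V]

theorem SuperSimple.idxOf_lt_of_occBefore {a b : V} {q : List V} (ha : SuperSimple E ι o a)
    (hab : OccBefore E ι o a b) (hq : IoSPath E ι o q) (hb : b ∈ q) :
    q.idxOf a < q.idxOf b := by
  obtain ⟨p, hp, hsub⟩ := hab
  have haq := ha q hq
  have hne : q.idxOf a ≠ q.idxOf b := fun h =>
    List.nodup_iff_sublist.1 hp.2.1 a (((List.idxOf_inj haq).1 h).symm ▸ hsub)
  refine lt_of_le_of_ne (not_lt.1 fun hba => ?_) hne
  exact ha.not_pair_sublist_of_pair_sublist hp hq hsub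
    ((hq.2.1.pair_sublist_iff hb haq).2 hba)

theorem slt_iff_idxOf_lt {x y : V} {p : List V} (hp : IoSPath E ι o p)
    (hx : SuperSimple E ι o x) (hy : SuperSimple E ι o y) :
    SLt E ι o x y ↔ p.idxOf x < p.idxOf y := by
  refine ⟨fun ⟨hxy, ρ, hρ, hxρ, hρy⟩ => ?_, fun h =>
    .of_pair_sublist_left hx hp ((hp.2.1.pair_sublist_iff (hx p hp) (hy p hp)).2 h)⟩
  have h₁ : p.idxOf x ≤ p.idxOf ρ := by
    rcases hxρ with rfl | h
    exacts [le_rfl, (hx.idxOf_lt_of_occBefore h hp (hρ p hp)).le]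
  have h₂ : p.idxOf ρ ≤ p.idxOf y := by
    rcases hρy with rfl | h
    exacts [le_rfl, (hρ.idxOf_lt_of_occBefore h hp (hy p hp)).le]
  have h₃ : p.idxOf x ≠ p.idxOf y := fun h => hxy ((List.idxOf_inj (hx p hp)).1 h)
  omega

theorem adjSS_iff_idxOf {ρ ρ' : V} {p : List V} (hp : IoSPath E ι o p) :
    AdjSS E ι o ρ ρ' ↔ SuperSimple E ι o ρ ∧ SuperSimple E ι o ρ' ∧
      p.idxOf ρ < p.idxOf ρ' ∧
      ∀ x, SuperSimple E ι o x → p.idxOf ρ < p.idxOf x → p.idxOf ρ' ≤ p.idxOf x := by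
  unfold AdjSS
  refine and_congr_right fun hρ => and_congr_right fun hρ' => ?_
  rw [slt_iff_idxOf_lt hp hρ hρ']
  refine and_congr_right fun _ => ?_
  simp only [not_exists, not_and]
  refine forall_congr' fun x => forall_congr' fun hx => ?_
  rw [slt_iff_idxOf_lt hp hρ hx, slt_iff_idxOf_lt hp hx hρ']
  omega

theorem exists_superSimple_before_maximal {σ : V} {p : List V} (hp : IoSPath E ι o p)
    (hσ : σ ∈ p) (hσι : σ ≠ ι) :
    ∃ ρ, SuperSimple E ι o ρ ∧ p.idxOf ρ < p.idxOf σ ∧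
      ∀ x, SuperSimple E ι o x → p.idxOf x < p.idxOf σ → p.idxOf x ≤ p.idxOf ρ := by
  classical
  have hι : p.idxOf ι < p.idxOf σ := (hp.2.1.pair_sublist_iff (superSimple_input p hp) hσ).1
    (hp.pair_sublist_head hσ hσι)
  obtain ⟨ρ, hρ, hmax⟩ :=
    (p.toFinset.filter fun x => SuperSimple E ι o x ∧ p.idxOf x < p.idxOf σ).exists_max_image
      p.idxOf ⟨ι, by simpa [hι] using ⟨superSimple_input p hp, superSimple_input⟩⟩
  simp only [Finset.mem_filter, List.mem_toFinset] at hρ hmax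
  exact ⟨ρ, hρ.2.1, hρ.2.2, fun x hx hxσ => hmax x ⟨hx p hp, hx, hxσ⟩⟩

theorem exists_superSimple_after_minimal {σ : V} {p : List V} (hp : IoSPath E ι o p)
    (hσ : σ ∈ p) (hσo : σ ≠ o) :
    ∃ ρ, SuperSimple E ι o ρ ∧ p.idxOf σ < p.idxOf ρ ∧
      ∀ x, SuperSimple E ι o x → p.idxOf σ < p.idxOf x → p.idxOf ρ ≤ p.idxOf x := by
  classical
  have ho : p.idxOf σ < p.idxOf o := (hp.2.1.pair_sublist_iff hσ (superSimple_output p hp)).1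
    (hp.pair_sublist_getLast hσ hσo)
  obtain ⟨ρ, hρ, hmin⟩ :=
    (p.toFinset.filter fun x => SuperSimple E ι o x ∧ p.idxOf σ < p.idxOf x).exists_min_image
      p.idxOf ⟨o, by simpa [ho] using ⟨superSimple_output p hp, superSimple_output⟩⟩
  simp only [Finset.mem_filter, List.mem_toFinset] at hρ hmin
  exact ⟨ρ, hρ.2.1, hρ.2.2, fun x hx hσx => hmin x ⟨hx p hp, hx, hσx⟩⟩

end Paths

theorem path_decomposition_general {V : Type*} (E : V → V → Prop) (ι o : V) :
    ∀ p, IoSPath E ι o p → ∀ σ ∈ p, ¬ SuperSimple E ι o σ →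
      ∃! rr : V × V, AdjSS E ι o rr.1 rr.2 ∧
        [rr.1, σ].Sublist p ∧ [σ, rr.2].Sublist p ∧
        SimpleNode E ι o σ ∧ SLt E ι o rr.1 σ ∧ SLt E ι o σ rr.2 := by
  classical
  intro p hp σ hσp hσ
  have sublist_iff {x y : V} (hx : x ∈ p) (hy : y ∈ p) := hp.2.1.pair_sublist_iff hx hy
  obtain ⟨ρ, hρ, hρσ_lt, hρ_max⟩ := exists_superSimple_before_maximal hp hσp
    (fun h => hσ (h ▸ superSimple_input))
  obtain ⟨ρ', hρ', hσρ'_lt, hρ'_min⟩ := exists_superSimple_after_minimal hp hσp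
    (fun h => hσ (h ▸ superSimple_output))
  have hρσ := (sublist_iff (hρ p hp) hσp).2 hρσ_lt
  have hσρ' := (sublist_iff hσp (hρ' p hp)).2 hσρ'_lt
  refine ⟨(ρ, ρ'), ?_, ?_⟩
  · dsimp only
    refine ⟨(adjSS_iff_idxOf hp).2 ⟨hρ, hρ', by omega, fun x hx hρx => ?_⟩, hρσ, hσρ',
      ⟨p, hp, hσp⟩, .of_pair_sublist_left hρ hp hρσ, .of_pair_sublist_right hρ' hp hσρ'⟩
    have hxσ : p.idxOf x ≠ p.idxOf σ := fun h => hσ ((List.idxOf_inj (hx p hp)).1 h ▸ hx)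
    rcases lt_or_gt_of_ne hxσ with h | h
    · exact absurd (hρ_max x hx h) (by omega)
    · exact hρ'_min x hx h
  rintro ⟨r, r'⟩ ⟨hadj, hrσ, hσr', -⟩
  dsimp only at hadj hrσ hσr'
  obtain ⟨hr, hr', -, hr_adj⟩ := (adjSS_iff_idxOf hp).1 hadj
  have hrσ_lt := (sublist_iff (hr p hp) hσp).1 hrσ
  have hσr'_lt := (sublist_iff hσp (hr' p hp)).1 hσr'
  have hrρ := hρ_max r hr hrσ_lt
  have hρ'r' := hρ'_min r' hr' hσr'_lt
  have hr'ρ := hr_adj ρ hρ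
  have hr'ρ' := hr_adj ρ' hρ'
  obtain rfl : r = ρ := (List.idxOf_inj (hr p hp)).1 (by omega)
  obtain rfl : r' = ρ' := (List.idxOf_inj (hr' p hp)).1 (by omega)
  rfl

/-- Every `ιo`-simple path decomposes (uniquely) along adjacent super-simple
nodes: every non-super-simple node `σ` on the path lies strictly between a
unique pair of adjacent super-simple nodes `ρ ≺ ρ'` on the path, and
satisfies `ρ ≺ σ ≺ ρ'`. -/
theorem path_decomposition {V : Type*} (E : V → V → Prop) (ι o : V)
    (hcore : Core E ι o) :
    ∀ p, IoSPath E ι o p → ∀ σ ∈ p, ¬ SuperSimple E ι o σ →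
      ∃! rr : V × V, AdjSS E ι o rr.1 rr.2 ∧
        [rr.1, σ].Sublist p ∧ [σ, rr.2].Sublist p ∧
        SimpleNode E ι o σ ∧ SLt E ι o rr.1 σ ∧ SLt E ι o σ rr.2 :=
  path_decomposition_general E ι o
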